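/- For ε ∈ (0,π/4), the function v_ε on [0,π] equal to 0 on [0,ε²], log(x/ε²) on [ε²,ε], log(1/ε) on [ε,π-ε], log((π-x)/ε²) on [π-ε,π-ε²], and 0 on [π-ε²,π], satisfies ∫₀^π v_ε(x) sin(x) dx > (3π/8)·log(1/ε). -/

import Mathlib

open MeasureTheory Real intervalIntegral

/-- The piecewise log-plateau function `v_ε` on `[0, π]`. -/
noncomputable def vfam (ε x : ℝ) : ℝ :=
  if x ≤ ε ^ 2 then 0
  else if x ≤ ε then Real.log (x / ε ^ 2)
  else if x ≤ Real.pi - ε then Real.log (1 / ε)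
  else if x ≤ Real.pi - ε ^ 2 then Real.log ((Real.pi - x) / ε ^ 2)
  else 0

/-! Since `v_ε ≥ 0` and `sin ≥ 0` on `[0, π]`, the integral is at least the integral over the
plateau `[ε, π - ε]`, which is `2 cos ε · log (1/ε)`; and `2 cos ε > 2 cos (π/4) = √2 > 3π/8`. -/

section vfam

variable {ε : ℝ}

lemma vfam_nonneg (hε : 0 < ε) (hε1 : ε ≤ 1) (x : ℝ) : 0 ≤ vfam ε x := by
  unfold vfam
  split_ifs with h1 h2 h3 h4
  · exact le_rfl
  · exact Real.log_nonneg <| (le_div_iff₀ (by positivity)).2 (by linarith)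
  · exact Real.log_nonneg <| (le_div_iff₀ hε).2 (by linarith)
  · exact Real.log_nonneg <| (le_div_iff₀ (by positivity)).2 (by linarith)
  · exact le_rfl

lemma vfam_le_log_inv (hε : 0 < ε) (hε1 : ε ≤ 1) (x : ℝ) : vfam ε x ≤ Real.log (1 / ε) := by
  have hL : 0 ≤ Real.log (1 / ε) := Real.log_nonneg <| (le_div_iff₀ hε).2 (by linarith)
  unfold vfam
  split_ifs with h1 h2 h3 h4
  · exact hL
  · refine Real.log_le_log ((lt_div_iff₀ (by positivity)).2 (by linarith [sq_nonneg ε])) ?_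
    rw [div_le_div_iff₀ (by positivity) hε]
    nlinarith
  · exact le_rfl
  · refine Real.log_le_log ((lt_div_iff₀ (by positivity)).2 (by linarith [pow_pos hε 2])) ?_
    rw [div_le_div_iff₀ (by positivity) hε]
    nlinarith
  · exact hL

lemma vfam_eq_log_inv_of_mem_Icc (hε : 0 < ε) (hε1 : ε < 1) {x : ℝ}
    (hx : x ∈ Set.Icc ε (π - ε)) : vfam ε x = Real.log (1 / ε) := by
  have hsq : ε ^ 2 < ε := by nlinarith
  unfold vfam
  rw [if_neg (by linarith [hx.1])]
  by_cases hxε : x ≤ ε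
  · rw [if_pos hxε, le_antisymm hxε hx.1, sq, ← div_div, div_self hε.ne']
  · rw [if_neg hxε, if_pos hx.2]

lemma measurable_vfam (ε : ℝ) : Measurable (vfam ε) := by
  unfold vfam
  refine Measurable.ite measurableSet_Iic measurable_const ?_
  refine Measurable.ite measurableSet_Iic (measurable_log.comp (measurable_id.div_const _)) ?_
  refine Measurable.ite measurableSet_Iic measurable_const ?_
  exact Measurable.ite measurableSet_Iic
    (measurable_log.comp ((measurable_const.sub measurable_id).div_const _)) measurable_const

lemma intervalIntegrable_vfam_mul_sin (hε : 0 < ε) (hε1 : ε ≤ 1) (a b : ℝ) :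
    IntervalIntegrable (fun x ↦ vfam ε x * sin x) volume a b := by
  refine (intervalIntegrable_const (c := Real.log (1 / ε))).mono_fun'
    ((measurable_vfam ε).mul measurable_sin).aestronglyMeasurable (ae_of_all _ fun x ↦ ?_)
  dsimp only
  rw [norm_mul, Real.norm_of_nonneg (vfam_nonneg hε hε1 x), ← mul_one (Real.log (1 / ε))]
  exact mul_le_mul (vfam_le_log_inv hε hε1 x) (abs_sin_le_one x) (abs_nonneg _)
    (vfam_nonneg hε hε1 x |>.trans (vfam_le_log_inv hε hε1 x))

lemma integral_plateau_vfam_mul_sin (hε : 0 < ε) (hε1 : ε < 1) (hεπ : ε ≤ π - ε) :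
    ∫ x in ε..π - ε, vfam ε x * sin x = 2 * cos ε * Real.log (1 / ε) := by
  have hplateau : Set.EqOn (fun x ↦ vfam ε x * sin x) (fun x ↦ Real.log (1 / ε) * sin x)
      (Set.uIcc ε (π - ε)) := fun x hx ↦ by
    rw [Set.uIcc_of_le hεπ] at hx
    simp only [vfam_eq_log_inv_of_mem_Icc hε hε1 hx]
  rw [integral_congr hplateau, intervalIntegral.integral_const_mul, integral_sin, cos_pi_sub]
  ring

end vfam

lemma three_mul_pi_div_sixteen_lt_cos {ε : ℝ} (hε : 0 ≤ ε) (hεπ : ε < π / 4) :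
    3 * π / 16 < cos ε := by
  have hsqrt2 : (1.414 : ℝ) < √2 := by
    nlinarith [sq_sqrt (show (0 : ℝ) ≤ 2 by norm_num), sqrt_nonneg 2]
  have hcos : cos (π / 4) < cos ε := cos_lt_cos_of_nonneg_of_le_pi hε (by linarith [pi_pos]) hεπ
  rw [cos_pi_div_four] at hcos
  linarith [pi_lt_d2]

/-- For `ε ∈ (0, π/4)`, `∫₀^π v_ε(x) sin x dx > (3π/8) log(1/ε)`. -/
theorem stmt_3 (ε : ℝ) (hε : ε ∈ Set.Ioo (0 : ℝ) (Real.pi / 4)) :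
    3 * Real.pi / 8 * Real.log (1 / ε) < ∫ x in (0:ℝ)..Real.pi, vfam ε x * Real.sin x := by
  obtain ⟨hε0, hεπ⟩ := hε
  have hε1 : ε < 1 := by linarith [pi_lt_d2]
  have hlog : 0 < Real.log (1 / ε) := Real.log_pos <| (lt_div_iff₀ hε0).2 (by linarith)
  calc 3 * π / 8 * Real.log (1 / ε) < 2 * cos ε * Real.log (1 / ε) := by
        nlinarith [three_mul_pi_div_sixteen_lt_cos hε0.le hεπ]
    _ = ∫ x in ε..π - ε, vfam ε x * sin x :=
        (integral_plateau_vfam_mul_sin hε0 hε1 (by linarith [pi_gt_three])).symm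
    _ ≤ ∫ x in (0 : ℝ)..π, vfam ε x * sin x := by
        refine integral_mono_interval hε0.le (by linarith [pi_gt_three]) (by linarith)
          ((ae_restrict_iff' measurableSet_Ioc).2 (ae_of_all _ fun x hx ↦ ?_))
          (intervalIntegrable_vfam_mul_sin hε0 hε1.le 0 π)
        exact mul_nonneg (vfam_nonneg hε0 hε1.le x) (sin_nonneg_of_nonneg_of_le_pi hx.1.le hx.2)
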